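/- arXiv:2109.03711 — 6 statements merged into one kernel-verified Lean document; each statement's English description precedes it below -/
import Mathlib

section
/- Let n ≥ 2, m ≥ 1, let F : X_n^m → X_n^m be an n-ary network, and let h be its associated one-step function. If F is nonexpanding, then h is nonexpanding: for all x, y ∈ X_n^m, d∞(x,y) ≤ 1 implies d∞(h(x), h(y)) ≤ 1. -/
/-- The state space condition: `x` is a point of `X_n^m`, i.e. every
coordinate lies in `{0, 1, …, n-1}` (viewed inside `ℤ`). -/
def inState (n m : ℕ) (x : Fin m → ℤ) : Prop :=
  ∀ v, 0 ≤ x v ∧ x v ≤ (n : ℤ) - 1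

/-- The Chebyshev distance `d∞(x,y) = max_v |x_v - y_v|`, as a natural number. -/
def dinf {m : ℕ} (x y : Fin m → ℤ) : ℕ :=
  Finset.univ.sup fun v => (x v - y v).natAbs

/-- The one-step function associated to a network `F`:
`h_v(x) = x_v + sgn(f_v(x) - x_v)`. -/
def oneStep {m : ℕ} (F : (Fin m → ℤ) → Fin m → ℤ) (x : Fin m → ℤ) : Fin m → ℤ :=
  fun v => x v + (F x v - x v).sign


lemma sign_key (a b d : ℤ) (hd : d.natAbs ≤ 1) (h : (a - b + d).natAbs ≤ 1) :
    (d + a.sign - b.sign).natAbs ≤ 1 := by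
  rcases lt_trichotomy a 0 with ha | ha | ha <;>
    rcases lt_trichotomy b 0 with hb | hb | hb <;>
    simp only [Int.sign_eq_neg_one_of_neg, Int.sign_eq_one_of_pos, ha, hb, Int.sign_zero] <;>
    omega

/-- If a network `F` is nonexpanding, then so is its one-step function `h`. -/
theorem oneStep_nonexpanding (n m : ℕ) (hn : 2 ≤ n) (hm : 1 ≤ m)
    (F : (Fin m → ℤ) → Fin m → ℤ)
    (hF : ∀ x, inState n m x → inState n m (F x))
    (hne : ∀ x y, inState n m x → inState n m y → dinf x y ≤ 1 →
      dinf (F x) (F y) ≤ 1) :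
    ∀ x y, inState n m x → inState n m y → dinf x y ≤ 1 →
      dinf (oneStep F x) (oneStep F y) ≤ 1 := by
  intro x y hx hy hxy
  have hFxy := hne x y hx hy hxy
  rw [dinf, Finset.sup_le_iff] at hxy hFxy ⊢
  intro v hv
  have h1 := hxy v hv
  have h2 := hFxy v hv
  have key := sign_key (F x v - x v) (F y v - y v) (x v - y v) h1 (by
    have : F x v - F y v = (F x v - x v) - (F y v - y v) + (x v - y v) := by ring
    omega)
  simpa [oneStep, show x v + (F x v - x v).sign - (y v + (F y v - y v).sign)
    = x v - y v + (F x v - x v).sign - (F y v - y v).sign by ring] using key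
end

section
/- Let n ≥ 2, m ≥ 1, let F : X_n^m → X_n^m be a nonexpanding n-ary network, and let h be its associated one-step function. If x ∈ X_n^m satisfies F(x) = h(x), then F^i(x) = h^i(x) for all natural numbers i, where F^i and h^i denote the i-fold compositions of F and h with themselves. -/
private lemma sign_eq_self_of_natAbs_le_one (w : ℤ) (h : w.natAbs ≤ 1) : w.sign = w := by
  have : w = -1 ∨ w = 0 ∨ w = 1 := by omega
  rcases this with h | h | h <;> simp [h]

/-- For a nonexpanding network, if `F(x) = h(x)` then `F^i(x) = h^i(x)`
for every natural number `i`. -/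
theorem iterate_eq_of_eq (n m : ℕ) (hn : 2 ≤ n) (hm : 1 ≤ m)
    (F : (Fin m → ℤ) → Fin m → ℤ)
    (hF : ∀ x, inState n m x → inState n m (F x))
    (hne : ∀ x y, inState n m x → inState n m y → dinf x y ≤ 1 →
      dinf (F x) (F y) ≤ 1)
    (x : Fin m → ℤ) (hx : inState n m x) (hxF : F x = oneStep F x) :
    ∀ i : ℕ, F^[i] x = (oneStep F)^[i] x := by
  -- key step: if z is in state and F z = h z, then F (F z) = h (F z)
  have key : ∀ z, inState n m z → F z = oneStep F z → F (F z) = oneStep F (F z) := by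
    intro z hz hzF
    have hd : dinf z (F z) ≤ 1 := by
      apply Finset.sup_le
      intro v _
      have heqv : F z v = z v + (F z v - z v).sign := congrFun hzF v
      rcases Int.lt_trichotomy (F z v - z v) 0 with h | h | h
      · rw [Int.sign_eq_neg_one_of_neg h] at heqv; omega
      · rw [h, Int.sign_zero] at heqv; omega
      · rw [Int.sign_eq_one_of_pos h] at heqv; omega
    have hd2 : dinf (F z) (F (F z)) ≤ 1 := hne z (F z) hz (hF z hz) hd
    funext v
    unfold dinf at hd2
    have hv : (F z v - F (F z) v).natAbs ≤ 1 :=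
      le_trans (Finset.le_sup (f := fun v => (F z v - F (F z) v).natAbs)
        (Finset.mem_univ v)) hd2
    have : (F (F z) v - F z v).natAbs ≤ 1 := by omega
    simp only [oneStep, sign_eq_self_of_natAbs_le_one _ this]
    ring
  -- strengthened induction
  have main : ∀ i, F^[i] x = (oneStep F)^[i] x ∧ inState n m (F^[i] x) ∧
      F (F^[i] x) = oneStep F (F^[i] x) := by
    intro i
    induction i with
    | zero => exact ⟨rfl, hx, hxF⟩
    | succ k ih =>
      obtain ⟨heq, hst, hFh⟩ := ih
      refine ⟨?_, ?_, ?_⟩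
      · rw [Function.iterate_succ_apply', Function.iterate_succ_apply', ← heq, hFh]
      · rw [Function.iterate_succ_apply']
        exact hF _ hst
      · rw [Function.iterate_succ_apply']
        exact key _ hst hFh
  exact fun i => (main i).1
end

section
/- Let n ≥ 2, m ≥ 1, let F : X_n^m → X_n^m be a nonexpanding n-ary network, and let h be its associated one-step function. Then for every x ∈ X_n^m and every integer i with 0 ≤ i ≤ n−2, one has d∞(F(h^i(x)), h(h^i(x))) ≤ (n−2) − i, where h^i denotes the i-fold composition of h with itself (h^0 being the identity). -/
lemma dinf_le_iff {m : ℕ} {x y : Fin m → ℤ} {k : ℕ} :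
    dinf x y ≤ k ↔ ∀ v, (x v - y v).natAbs ≤ k := by
  simp [dinf, Finset.sup_le_iff]

lemma state_oneStep {n m : ℕ} {F : (Fin m → ℤ) → Fin m → ℤ} {x : Fin m → ℤ}
    (hx : inState n m x) (hFx : inState n m (F x)) : inState n m (oneStep F x) := by
  intro v
  have h1 := hx v
  have h2 := hFx v
  show 0 ≤ x v + (F x v - x v).sign ∧ x v + (F x v - x v).sign ≤ (n : ℤ) - 1
  rcases lt_trichotomy (F x v - x v) 0 with h | h | h
  · rw [Int.sign_eq_neg_one_of_neg h]; omega
  · rw [h, Int.sign_zero]; omega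
  · rw [Int.sign_eq_one_of_pos h]; omega

lemma dinf_oneStep_le_one {m : ℕ} (F : (Fin m → ℤ) → Fin m → ℤ) (x : Fin m → ℤ) :
    dinf x (oneStep F x) ≤ 1 := by
  rw [dinf_le_iff]
  intro v
  show (x v - (x v + (F x v - x v).sign)).natAbs ≤ 1
  rcases lt_trichotomy (F x v - x v) 0 with h | h | h
  · rw [Int.sign_eq_neg_one_of_neg h]; omega
  · rw [h, Int.sign_zero]; omega
  · rw [Int.sign_eq_one_of_pos h]; omega

/-- For a nonexpanding network, `d∞(F(h^i(x)), h(h^i(x))) ≤ (n-2) - i`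
for every state `x` and every `0 ≤ i ≤ n-2`. -/
theorem dist_F_oneStep_iterate (n m : ℕ) (hn : 2 ≤ n) (hm : 1 ≤ m)
    (F : (Fin m → ℤ) → Fin m → ℤ)
    (hF : ∀ x, inState n m x → inState n m (F x))
    (hne : ∀ x y, inState n m x → inState n m y → dinf x y ≤ 1 →
      dinf (F x) (F y) ≤ 1) :
    ∀ x, inState n m x → ∀ i : ℕ, i ≤ n - 2 →
      dinf (F ((oneStep F)^[i] x)) (oneStep F ((oneStep F)^[i] x)) ≤ (n - 2) - i := by
  intro x hx
  have key : ∀ i : ℕ, inState n m ((oneStep F)^[i] x) ∧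
      ∀ v, ((F ((oneStep F)^[i] x) v - ((oneStep F)^[i] x) v).natAbs ≤ 1 ∨
        (2 ≤ F ((oneStep F)^[i] x) v - ((oneStep F)^[i] x) v ∧
          (i : ℤ) ≤ ((oneStep F)^[i] x) v) ∨
        (F ((oneStep F)^[i] x) v - ((oneStep F)^[i] x) v ≤ -2 ∧
          ((oneStep F)^[i] x) v ≤ (n : ℤ) - 1 - i)) := by
    intro i
    induction i with
    | zero =>
        refine ⟨hx, fun v => ?_⟩
        simp only [Function.iterate_zero, id_eq, Nat.cast_zero]
        have h1 := hx v
        have h2 := hF x hx v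
        omega
    | succ i ih =>
        obtain ⟨hy, hQ⟩ := ih
        set y := (oneStep F)^[i] x with hydef
        have hFy := hF y hy
        have hy' : inState n m (oneStep F y) := state_oneStep hy hFy
        have hne1 : dinf (F y) (F (oneStep F y)) ≤ 1 :=
          hne y (oneStep F y) hy hy' (dinf_oneStep_le_one F y)
        rw [Function.iterate_succ_apply', ← hydef]
        refine ⟨hy', fun v => ?_⟩
        have hQv := hQ v
        have hb : (F y v - F (oneStep F y) v).natAbs ≤ 1 :=
          le_trans (Finset.le_sup (f := fun v => (F y v - F (oneStep F y) v).natAbs)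
            (Finset.mem_univ v)) hne1
        have hy1 := hy v
        have hFy1 := hFy v
        have hFy' := hF (oneStep F y) hy' v
        have hstep : oneStep F y v = y v + (F y v - y v).sign := rfl
        push_cast
        rcases lt_trichotomy (F y v - y v) 0 with h | h | h
        · rw [Int.sign_eq_neg_one_of_neg h] at hstep
          rw [hstep] at *; omega
        · rw [h, Int.sign_zero] at hstep
          rw [hstep] at *; omega
        · rw [Int.sign_eq_one_of_pos h] at hstep
          rw [hstep] at *; omega
  intro i hi
  obtain ⟨hy, hQ⟩ := key i
  set y := (oneStep F)^[i] x with hydef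
  rw [dinf_le_iff]
  intro v
  have hQv := hQ v
  have hy1 := hy v
  have hFy1 := hF y hy v
  have hstep : oneStep F y v = y v + (F y v - y v).sign := rfl
  rcases lt_trichotomy (F y v - y v) 0 with h | h | h
  · rw [Int.sign_eq_neg_one_of_neg h] at hstep
    rw [hstep]; omega
  · rw [h, Int.sign_zero] at hstep
    rw [hstep]; omega
  · rw [Int.sign_eq_one_of_pos h] at hstep
    rw [hstep]; omega
end

section
/- Let n ≥ 2, m ≥ 1, let F : X_n^m → X_n^m be a nonexpanding n-ary network, and let h be its associated one-step function. Suppose x ∈ X_n^m lies on a k-cycle of h for some k ≥ 1, i.e., h^k(x) = x. Then the same cycle is a k-cycle of F: for every natural number j, F^j(x) = h^j(x); in particular F^k(x) = x. -/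
lemma sign_trich (d : ℤ) :
    (d.sign = -1 ∧ d < 0) ∨ (d.sign = 0 ∧ d = 0) ∨ (d.sign = 1 ∧ 0 < d) := by
  rcases lt_trichotomy d 0 with h | h | h
  · exact Or.inl ⟨Int.sign_eq_neg_one_of_neg h, h⟩
  · exact Or.inr (Or.inl ⟨by rw [h]; rfl, h⟩)
  · exact Or.inr (Or.inr ⟨Int.sign_eq_one_of_pos h, h⟩)

/-- Key sequence lemma: if `g` is `k`-periodic, `u` moves by `sign (g i)` at
each step, `g` changes by at most `1` beyond the sign correction, and `u`
returns after `k ≥ 1` steps, then `g i ≤ 1` for all `i`. -/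
lemma seq_bound (k : ℕ) (hk : 1 ≤ k) (g u : ℕ → ℤ)
    (hper : ∀ a, g (a + k) = g a)
    (hstep : ∀ i, u (i + 1) = u i + (g i).sign)
    (hbnd : ∀ i, (g (i + 1) - (g i - (g i).sign)).natAbs ≤ 1)
    (hu : u k = u 0) :
    ∀ i, g i ≤ 1 := by
  by_contra hc
  push_neg at hc
  obtain ⟨i₀, hi₀⟩ := hc
  have back : ∀ j, 2 ≤ g (j + 1) → 2 ≤ g j := by
    intro j hj
    have b := hbnd j
    rcases sign_trich (g j) with ⟨hs, hv⟩ | ⟨hs, hv⟩ | ⟨hs, hv⟩ <;> rw [hs] at b <;> omega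
  have backd : ∀ d j, 2 ≤ g (j + d) → 2 ≤ g j := by
    intro d
    induction d with
    | zero => intro j hj; exact hj
    | succ d ih =>
      intro j hj
      exact ih j (back (j + d) hj)
  have pmul : ∀ t a, g (a + t * k) = g a := by
    intro t
    induction t with
    | zero => intro a; simp
    | succ t ih =>
      intro a
      have e : a + (t + 1) * k = (a + t * k) + k := by ring
      rw [e, hper, ih]
  have all2 : ∀ j, 2 ≤ g j := by
    intro j
    have h1 : j ≤ j * k := Nat.le_mul_of_pos_right j hk
    apply backd (i₀ + j * k - j) j
    have e : j + (i₀ + j * k - j) = i₀ + j * k := by omega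
    rw [e, pmul]
    omega
  have ulin : ∀ j, u j = u 0 + j := by
    intro j
    induction j with
    | zero => simp
    | succ j ih =>
      have hs : (g j).sign = 1 := by
        rcases sign_trich (g j) with ⟨hs, hv⟩ | ⟨hs, hv⟩ | ⟨hs, hv⟩
        · have := all2 j; omega
        · have := all2 j; omega
        · exact hs
      have := hstep j
      rw [hs] at this
      push_cast
      omega
  have := ulin k
  have hk' : (1 : ℤ) ≤ (k : ℤ) := by exact_mod_cast hk
  omega

/-- For a nonexpanding network, every `k`-cycle of the one-step network is a
`k`-cycle of the original network: if `h^k(x) = x` with `k ≥ 1` then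
`F^j(x) = h^j(x)` for all `j`; in particular `F^k(x) = x`. -/
theorem cycle_of_oneStep_is_cycle (n m : ℕ) (hn : 2 ≤ n) (hm : 1 ≤ m)
    (F : (Fin m → ℤ) → Fin m → ℤ)
    (hF : ∀ x, inState n m x → inState n m (F x))
    (hne : ∀ x y, inState n m x → inState n m y → dinf x y ≤ 1 →
      dinf (F x) (F y) ≤ 1)
    (x : Fin m → ℤ) (hx : inState n m x)
    (k : ℕ) (hk : 1 ≤ k) (hcyc : (oneStep F)^[k] x = x) :
    (∀ j : ℕ, F^[j] x = (oneStep F)^[j] x) ∧ F^[k] x = x := by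
  set h := oneStep F with hh
  set y : ℕ → Fin m → ℤ := fun i => h^[i] x with hy
  have hystep : ∀ i, y (i + 1) = h (y i) := fun i => Function.iterate_succ_apply' h i x
  have hyv : ∀ i v, y (i + 1) v = y i v + (F (y i) v - y i v).sign := by
    intro i v
    rw [hystep]
    rfl
  have hstate : ∀ i, inState n m (y i) := by
    intro i
    induction i with
    | zero => exact hx
    | succ i ih =>
      intro v
      have h1 := ih v
      have h2 := hF (y i) ih v
      rw [hyv i v]
      rcases sign_trich (F (y i) v - y i v) with ⟨hs, hv⟩ | ⟨hs, hv⟩ | ⟨hs, hv⟩ <;>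
        rw [hs] <;> constructor <;> omega
  have dadj : ∀ i, dinf (y i) (y (i + 1)) ≤ 1 := by
    intro i
    apply Finset.sup_le
    intro v _
    rw [hyv i v]
    rcases sign_trich (F (y i) v - y i v) with ⟨hs, hv⟩ | ⟨hs, hv⟩ | ⟨hs, hv⟩ <;>
      rw [hs] <;> omega
  have Fne : ∀ i v, (F (y (i + 1)) v - F (y i) v).natAbs ≤ 1 := by
    intro i v
    have hd := hne (y i) (y (i + 1)) (hstate i) (hstate (i + 1)) (dadj i)
    simp only [dinf] at hd
    have hle : (F (y i) v - F (y (i + 1)) v).natAbs ≤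
        Finset.univ.sup (fun v => (F (y i) v - F (y (i + 1)) v).natAbs) :=
      by exact Finset.le_sup (f := fun v => (F (y i) v - F (y (i + 1)) v).natAbs) (Finset.mem_univ v)
    omega
  have yper : ∀ a, y (a + k) = y a := by
    intro a
    show h^[a + k] x = h^[a] x
    rw [Function.iterate_add_apply, hcyc]
  have key : ∀ i, F (y i) = h (y i) := by
    intro i
    funext v
    set g : ℕ → ℤ := fun i => F (y i) v - y i v with hg
    set u : ℕ → ℤ := fun i => y i v with huu
    have hper : ∀ a, g (a + k) = g a := by
      intro a
      simp only [hg, yper]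
    have hstep : ∀ i, u (i + 1) = u i + (g i).sign := fun i => hyv i v
    have hbnd : ∀ i, (g (i + 1) - (g i - (g i).sign)).natAbs ≤ 1 := by
      intro i
      have e : g (i + 1) - (g i - (g i).sign) = F (y (i + 1)) v - F (y i) v := by
        simp only [hg]
        rw [hyv i v]
        ring
      rw [e]
      exact Fne i v
    have hu : u k = u 0 := by
      simp only [huu]
      show (h^[k] x) v = (h^[0] x) v
      rw [hcyc]
      rfl
    have hup : ∀ i, g i ≤ 1 := seq_bound k hk g u hper hstep hbnd hu
    have hlo : ∀ i, -g i ≤ 1 := by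
      apply seq_bound k hk (fun i => -g i) (fun i => -u i)
      · intro a; simp [hper a]
      · intro i
        have := hstep i
        simp only [Int.sign_neg]
        omega
      · intro i
        have := hbnd i
        simp only [Int.sign_neg]
        omega
      · simp [hu]
    show F (y i) v = y i v + (F (y i) v - y i v).sign
    have h1 := hup i
    have h2 := hlo i
    rcases sign_trich (F (y i) v - y i v) with ⟨hs, hv⟩ | ⟨hs, hv⟩ | ⟨hs, hv⟩ <;>
      rw [hs] <;> simp only [hg] at h1 h2 <;> omega
  have main : ∀ j, F^[j] x = y j := by
    intro j
    induction j with
    | zero => rfl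
    | succ j ih =>
      rw [Function.iterate_succ_apply', ih, hystep, key]
  refine ⟨main, ?_⟩
  rw [main k]
  exact hcyc
end

section
/- Let n ≥ 2, m ≥ 1, let F : X_n^m → X_n^m be a nonexpanding n-ary network, and let h be its associated one-step function. Let x ∈ X_n^m and let i ≥ 1 be a natural number. If F(h^{i−1}(x)) = h(h^{i−1}(x)), then F(h^i(x)) = h(h^i(x)), where h^j denotes the j-fold composition of h with itself. -/
lemma sign_cases (a : ℤ) : (0 < a ∧ a.sign = 1) ∨ (a = 0 ∧ a.sign = 0) ∨ (a < 0 ∧ a.sign = -1) := by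
  rcases lt_trichotomy a 0 with h | h | h
  · exact Or.inr (Or.inr ⟨h, Int.sign_eq_neg_one_of_neg h⟩)
  · exact Or.inr (Or.inl ⟨h, by simp [h]⟩)
  · exact Or.inl ⟨h, Int.sign_eq_one_of_pos h⟩

lemma oneStep_state {n m : ℕ} {F : (Fin m → ℤ) → Fin m → ℤ}
    (hF : ∀ x, inState n m x → inState n m (F x))
    {x : Fin m → ℤ} (hx : inState n m x) : inState n m (oneStep F x) := by
  intro v
  have h1 := hx v
  have h2 := hF x hx v
  have := sign_cases (F x v - x v)
  simp only [oneStep]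
  omega

lemma iter_state {n m : ℕ} {F : (Fin m → ℤ) → Fin m → ℤ}
    (hF : ∀ x, inState n m x → inState n m (F x))
    {x : Fin m → ℤ} (hx : inState n m x) (k : ℕ) : inState n m ((oneStep F)^[k] x) := by
  induction k with
  | zero => simpa using hx
  | succ k ih =>
    rw [Function.iterate_succ_apply']
    exact oneStep_state hF ih

lemma dinf_le_one {m : ℕ} {x y : Fin m → ℤ} (h : ∀ v, (x v - y v).natAbs ≤ 1) :
    dinf x y ≤ 1 := Finset.sup_le fun v _ => h v

lemma dinf_le_one_of {m : ℕ} {x y : Fin m → ℤ} (h : dinf x y ≤ 1) (v : Fin m) :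
    (x v - y v).natAbs ≤ 1 :=
  le_trans (Finset.le_sup (f := fun v => (x v - y v).natAbs) (Finset.mem_univ v)) h

/-- For a nonexpanding network, if `F(h^(i-1)(x)) = h(h^(i-1)(x))` then
`F(h^i(x)) = h(h^i(x))`. -/
theorem agree_propagates (n m : ℕ) (hn : 2 ≤ n) (hm : 1 ≤ m)
    (F : (Fin m → ℤ) → Fin m → ℤ)
    (hF : ∀ x, inState n m x → inState n m (F x))
    (hne : ∀ x y, inState n m x → inState n m y → dinf x y ≤ 1 →
      dinf (F x) (F y) ≤ 1)
    (x : Fin m → ℤ) (hx : inState n m x) (i : ℕ) (hi : 1 ≤ i)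
    (h1 : F ((oneStep F)^[i - 1] x) = oneStep F ((oneStep F)^[i - 1] x)) :
    F ((oneStep F)^[i] x) = oneStep F ((oneStep F)^[i] x) := by
  set y := (oneStep F)^[i - 1] x with hy
  have hys : inState n m y := iter_state hF hx _
  have hFys : inState n m (F y) := hF y hys
  have hd1 : dinf y (F y) ≤ 1 := by
    apply dinf_le_one
    intro v
    have hv : F y v = y v + (F y v - y v).sign := congrFun h1 v
    have := sign_cases (F y v - y v)
    omega
  have hd2 := hne y (F y) hys hFys hd1
  have hiter : (oneStep F)^[i] x = F y := by
    have : i = (i - 1) + 1 := by omega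
    rw [this, Function.iterate_succ_apply', ← hy, ← h1]
  rw [hiter]
  funext v
  have hd2v := dinf_le_one_of hd2 v
  have := sign_cases (F (F y) v - F y v)
  simp only [oneStep]
  omega
end

section
/- Let n ≥ 2, m ≥ 1, and let F : X_n^m → X_n^m be an n-ary network that is d_2-nonexpanding, i.e., for all x, y ∈ X_n^m with d_2(x,y) ≤ 1 one has d_2(F(x), F(y)) ≤ 1, where d_2 is the Euclidean distance. Then d_2(F(x), F(y)) ≤ √m · d_2(x, y) for all x, y ∈ X_n^m. -/
/-- The Euclidean distance `d₂(x,y) = (Σ_v |x_v - y_v|²)^(1/2)`, as a real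
number. -/
noncomputable def dTwo {m : ℕ} (x y : Fin m → ℤ) : ℝ :=
  Real.sqrt (∑ v, ((x v : ℝ) - (y v : ℝ)) ^ 2)

/-!
Moving from `x` to `y` one unit step at a time along coordinate axes stays inside the box
`X_n^m` and takes `d₁(x, y)` steps, each of Euclidean length `1`. Nonexpansion and the triangle
inequality give `d₂(F x, F y) ≤ d₁(x, y)`, and Cauchy–Schwarz gives `d₁ ≤ √m · d₂`.
-/

section

variable {n m : ℕ}

def dOne (x y : Fin m → ℤ) : ℕ :=
  ∑ v, (x v - y v).natAbs

def toEuclideanSpace (x : Fin m → ℤ) : EuclideanSpace ℝ (Fin m) :=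
  WithLp.toLp 2 fun v => (x v : ℝ)

theorem dTwo_eq_dist_toEuclideanSpace (x y : Fin m → ℤ) :
    dTwo x y = dist (toEuclideanSpace x) (toEuclideanSpace y) := by
  simp [dTwo, toEuclideanSpace, EuclideanSpace.dist_eq, Real.dist_eq, sq_abs]

theorem dOne_eq_zero_iff {x y : Fin m → ℤ} : dOne x y = 0 ↔ x = y := by
  simp [dOne, Finset.sum_eq_zero_iff, funext_iff, sub_eq_zero]

theorem exists_unit_step_toward {x y : Fin m → ℤ} (hx : inState n m x) (hy : inState n m y)
    (hxy : x ≠ y) :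
    ∃ z, inState n m z ∧ dTwo x z ≤ 1 ∧ dOne z y + 1 = dOne x y := by
  obtain ⟨v, hv⟩ := Function.ne_iff.mp hxy
  set z := Function.update x v (if x v < y v then x v + 1 else x v - 1)
  have hz_off : ∀ w ∈ ({v}ᶜ : Finset (Fin m)), z w = x w := fun w hw =>
    Function.update_of_ne (by simpa using hw) _ _
  have hz_on : z v = if x v < y v then x v + 1 else x v - 1 := Function.update_self _ _ _
  refine ⟨z, fun w => ?_, ?_, ?_⟩
  · by_cases hw : w = v
    · subst hw
      have := hx w; have := hy w
      rw [hz_on]; split_ifs <;> omega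
    · rw [hz_off w (by simpa using hw)]; exact hx w
  · have hsq : ∑ w, ((x w : ℝ) - z w) ^ 2 = 1 := by
      rw [Fintype.sum_eq_add_sum_compl v, Finset.sum_eq_zero fun w hw => by rw [hz_off w hw]; ring,
        hz_on]
      split_ifs <;> push_cast <;> ring
    simp [dTwo, hsq]
  · have hv_step : (z v - y v).natAbs + 1 = (x v - y v).natAbs := by
      rw [hz_on]; split_ifs <;> omega
    rw [dOne, dOne, Fintype.sum_eq_add_sum_compl v,
      Fintype.sum_eq_add_sum_compl v (f := fun w => _),
      Finset.sum_congr rfl fun w hw => by rw [hz_off w hw], ← hv_step]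
    ring

theorem dist_le_dOne_of_dTwo_le_one {E : Type*} [PseudoMetricSpace E] (f : (Fin m → ℤ) → E)
    (hf : ∀ x y, inState n m x → inState n m y → dTwo x y ≤ 1 → dist (f x) (f y) ≤ 1)
    {x y : Fin m → ℤ} (hx : inState n m x) (hy : inState n m y) :
    dist (f x) (f y) ≤ dOne x y := by
  induction hk : dOne x y generalizing x with
  | zero => simp [dOne_eq_zero_iff.mp hk]
  | succ k ih =>
    have hxy : x ≠ y := by rintro rfl; simp [dOne] at hk
    obtain ⟨z, hz, hxz, hzy⟩ := exists_unit_step_toward hx hy hxy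
    calc dist (f x) (f y) ≤ dist (f x) (f z) + dist (f z) (f y) := dist_triangle _ _ _
      _ ≤ 1 + k := add_le_add (hf x z hx hz hxz) (ih hz (by omega))
      _ = (k + 1 : ℕ) := by push_cast; ring

theorem dOne_le_sqrt_mul_dTwo (x y : Fin m → ℤ) :
    (dOne x y : ℝ) ≤ √m * dTwo x y := by
  have hcs : (∑ v, |(x v : ℝ) - y v|) ^ 2 ≤ m * ∑ v, ((x v : ℝ) - y v) ^ 2 := by
    simpa [sq_abs] using
      sq_sum_le_card_mul_sum_sq (s := Finset.univ) (f := fun v => |(x v : ℝ) - y v|)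
  rw [dTwo, ← Real.sqrt_mul (Nat.cast_nonneg m), Real.le_sqrt (Nat.cast_nonneg _) (by positivity)]
  simpa [dOne, Nat.cast_natAbs] using hcs

end

theorem dTwo_nonexpanding_lipschitz_general (n m : ℕ)
    (F : (Fin m → ℤ) → Fin m → ℤ)
    (hne : ∀ x y, inState n m x → inState n m y → dTwo x y ≤ 1 →
      dTwo (F x) (F y) ≤ 1) :
    ∀ x y, inState n m x → inState n m y →
      dTwo (F x) (F y) ≤ Real.sqrt m * dTwo x y := by
  intro x y hx hy
  have hlip : dist (toEuclideanSpace (F x)) (toEuclideanSpace (F y)) ≤ dOne x y :=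
    dist_le_dOne_of_dTwo_le_one (toEuclideanSpace ∘ F) (fun a b ha hb hab => by
      simpa only [Function.comp_apply, dTwo_eq_dist_toEuclideanSpace] using hne a b ha hb hab) hx hy
  rw [dTwo_eq_dist_toEuclideanSpace (F x)]
  exact hlip.trans (dOne_le_sqrt_mul_dTwo x y)

/-- If a network is `d₂`-nonexpanding then
`d₂(F(x), F(y)) ≤ √m · d₂(x, y)` for all states `x, y`. -/
theorem dTwo_nonexpanding_lipschitz (n m : ℕ) (hn : 2 ≤ n) (hm : 1 ≤ m)
    (F : (Fin m → ℤ) → Fin m → ℤ)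
    (hF : ∀ x, inState n m x → inState n m (F x))
    (hne : ∀ x y, inState n m x → inState n m y → dTwo x y ≤ 1 →
      dTwo (F x) (F y) ≤ 1) :
    ∀ x y, inState n m x → inState n m y →
      dTwo (F x) (F y) ≤ Real.sqrt m * dTwo x y :=
  dTwo_nonexpanding_lipschitz_general n m F hne
end
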